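/- arXiv:2406.07352 — 4 statements merged into one kernel-verified Lean document; each statement's English description precedes it below -/
import Mathlib

section
/- Let W be Poisson with parameter λ > 0 and let W̃ be W conditioned on W ≥ 1, i.e., P(W̃ = w) = (λ^w e^{-λ}/w!)/(1 - e^{-λ}) for w ≥ 1. Then E[1/W̃] ≥ (1 - λ e^{-λ} - e^{-λ})/(λ(1 - e^{-λ})). -/
set_option maxHeartbeats 1000000

/-- Let `W` be Poisson with parameter `r > 0` and `W̃` be `W` conditioned on `W ≥ 1`.
Then `E[1/W̃] ≥ (1 - r e^{-r} - e^{-r})/(r (1 - e^{-r}))`. -/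
theorem poisson_conditioned_expectation_inv (r : ℝ) (hr : 0 < r) :
    (1 - r * Real.exp (-r) - Real.exp (-r)) / (r * (1 - Real.exp (-r)))
      ≤ ∑' w : ℕ, (if 1 ≤ w then
          (1 / (w : ℝ)) * ((r ^ w * Real.exp (-r) / (Nat.factorial w)) / (1 - Real.exp (-r)))
        else 0) := by
  set e := Real.exp (-r) with he_def
  have he : 0 < e := Real.exp_pos _
  have he1 : e < 1 := by
    rw [he_def, ← Real.exp_zero]
    exact Real.exp_lt_exp.mpr (by linarith)
  have h1e : 0 < 1 - e := by linarith
  have hee : e * Real.exp r = 1 := by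
    rw [he_def, ← Real.exp_add]; simp
  set f : ℕ → ℝ := fun w => if 1 ≤ w then
      (1 / (w : ℝ)) * ((r ^ w * e / (Nat.factorial w)) / (1 - e)) else 0 with hf_def
  set g : ℕ → ℝ := fun w => if 1 ≤ w then
      r ^ w * e / ((Nat.factorial (w+1)) * (1 - e)) else 0 with hg_def
  have hbase : Summable fun n : ℕ => r ^ n / (Nat.factorial n : ℝ) :=
    Real.summable_pow_div_factorial r
  -- summability of f
  have hf_le : ∀ w : ℕ, f w ≤ (e / (1 - e)) * (r ^ w / (Nat.factorial w : ℝ)) := by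
    intro w
    simp only [hf_def]
    split_ifs with hw
    · have hw1 : (1 : ℝ) ≤ (w : ℝ) := by exact_mod_cast hw
      have hfac : (0 : ℝ) < (Nat.factorial w : ℝ) := by positivity
      have hpow : (0 : ℝ) ≤ r ^ w := by positivity
      have h1 : (1 / (w : ℝ)) * ((r ^ w * e / (Nat.factorial w)) / (1 - e))
          ≤ 1 * ((r ^ w * e / (Nat.factorial w)) / (1 - e)) := by
        apply mul_le_mul_of_nonneg_right
        · rw [div_le_one (by linarith)]; linarith
        · positivity
      calc (1 / (w : ℝ)) * ((r ^ w * e / (Nat.factorial w)) / (1 - e))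
          ≤ 1 * ((r ^ w * e / (Nat.factorial w)) / (1 - e)) := h1
        _ = (e / (1 - e)) * (r ^ w / (Nat.factorial w)) := by ring
    · positivity
  have hf_nonneg : ∀ w : ℕ, 0 ≤ f w := by
    intro w
    simp only [hf_def]
    split_ifs with hw
    · have : (0 : ℝ) ≤ (w : ℝ) := Nat.cast_nonneg _
      positivity
    · exact le_refl 0
  have hf_summable : Summable f :=
    Summable.of_nonneg_of_le hf_nonneg hf_le (hbase.mul_left _)
  have hg_nonneg : ∀ w : ℕ, 0 ≤ g w := by
    intro w
    simp only [hg_def]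
    split_ifs with hw
    · positivity
    · exact le_refl 0
  -- g ≤ f pointwise
  have hgf : ∀ w : ℕ, g w ≤ f w := by
    intro w
    simp only [hf_def, hg_def]
    split_ifs with hw
    · have hw1 : (1 : ℝ) ≤ (w : ℝ) := by exact_mod_cast hw
      have hfac : (0 : ℝ) < (Nat.factorial w : ℝ) := by positivity
      have hfeq : (1 / (w : ℝ)) * ((r ^ w * e / (Nat.factorial w)) / (1 - e))
          = r ^ w * e / (((w : ℝ) * Nat.factorial w) * (1 - e)) := by
        field_simp
      rw [hfeq]
      have hfac1 : (Nat.factorial (w+1) : ℝ) = ((w : ℝ) + 1) * Nat.factorial w := by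
        rw [Nat.factorial_succ]; push_cast; ring
      rw [hfac1]
      apply div_le_div_of_nonneg_left (by positivity)
        (mul_pos (mul_pos (by linarith : (0:ℝ) < (w : ℝ)) hfac) h1e)
        (by nlinarith [mul_pos hfac h1e])
    · exact le_refl 0
  -- summability of the shifted exponential series
  have hshift2 : Summable fun n : ℕ => r ^ (n+2) / (Nat.factorial (n+2) : ℝ) :=
    (summable_nat_add_iff 2).mpr hbase
  have hg1_eq : ∀ n : ℕ, g (n+1) = (e / ((1 - e) * r)) * (r ^ (n+2) / (Nat.factorial (n+2) : ℝ)) := by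
    intro n
    simp only [hg_def, if_pos (Nat.succ_le_succ (Nat.zero_le n))]
    have hfac : (0 : ℝ) < (Nat.factorial (n+2) : ℝ) := by positivity
    field_simp
    ring
  have hg_summable : Summable g := by
    rw [← summable_nat_add_iff 1]
    simp only [hg1_eq]
    exact hshift2.mul_left _
  -- exp series
  have hexp : Real.exp r = ∑' n : ℕ, r ^ n / (Nat.factorial n : ℝ) := by
    rw [Real.exp_eq_exp_ℝ, NormedSpace.exp_eq_tsum_div]
  have hshift1 : Summable fun n : ℕ => r ^ (n+1) / (Nat.factorial (n+1) : ℝ) :=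
    (summable_nat_add_iff 1).mpr hbase
  have hsum2 : ∑' n : ℕ, r ^ (n+2) / (Nat.factorial (n+2) : ℝ) = Real.exp r - 1 - r := by
    have h0 : ∑' n : ℕ, r ^ n / (Nat.factorial n : ℝ)
        = r ^ 0 / (Nat.factorial 0 : ℝ) + ∑' n : ℕ, r ^ (n+1) / (Nat.factorial (n+1) : ℝ) :=
      Summable.tsum_eq_zero_add hbase
    have h1 : ∑' n : ℕ, r ^ (n+1) / (Nat.factorial (n+1) : ℝ)
        = r ^ 1 / (Nat.factorial 1 : ℝ) + ∑' n : ℕ, r ^ (n+2) / (Nat.factorial (n+2) : ℝ) :=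
      Summable.tsum_eq_zero_add hshift1
    rw [hexp, h0, h1]
    norm_num
  -- value of ∑ g
  have hgsum : ∑' w : ℕ, g w = (1 - r * e - e) / (r * (1 - e)) := by
    rw [Summable.tsum_eq_zero_add hg_summable]
    have hg0 : g 0 = 0 := by simp [hg_def]
    rw [hg0, zero_add]
    simp only [hg1_eq]
    rw [tsum_mul_left, hsum2]
    have hr' : r ≠ 0 := ne_of_gt hr
    have h1e' : (1 : ℝ) - e ≠ 0 := ne_of_gt h1e
    field_simp
    linear_combination hee
  calc (1 - r * e - e) / (r * (1 - e)) = ∑' w : ℕ, g w := hgsum.symm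
    _ ≤ ∑' w : ℕ, f w := Summable.tsum_le_tsum hgf hg_summable hf_summable
end

section
/- For a Poisson random variable W with parameter λ > 0 and any integer k ≥ 1, E[W^k] ≤ (k / log(1 + k/λ))^k. -/
lemma pow_le_exp_aux (k : ℕ) (hk : 1 ≤ k) (y : ℝ) (hy : 0 ≤ y) :
    y ^ k ≤ (k : ℝ) ^ k * Real.exp (y - k) := by
  rcases eq_or_lt_of_le hy with h | h
  · rw [← h, zero_pow (by omega)]
    positivity
  · have hk0 : (0 : ℝ) < k := by exact_mod_cast hk
    have h1 : Real.log (y / k) ≤ y / k - 1 := Real.log_le_sub_one_of_pos (by positivity)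
    have h2 : (y / k) ^ k ≤ Real.exp (y - k) := by
      have he : (y / k) ^ k = Real.exp (k * Real.log (y / k)) := by
        rw [← Real.log_pow, Real.exp_log (by positivity)]
      rw [he]
      apply Real.exp_le_exp.2
      have := mul_le_mul_of_nonneg_left h1 (le_of_lt hk0)
      calc (k : ℝ) * Real.log (y / k) ≤ k * (y / k - 1) := this
        _ = y - k := by field_simp
    calc y ^ k = (k : ℝ) ^ k * (y / k) ^ k := by
          rw [div_pow]; field_simp
      _ ≤ (k : ℝ) ^ k * Real.exp (y - k) := by
          exact mul_le_mul_of_nonneg_left h2 (by positivity)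

/-- (Ahle's moment bound) For a Poisson random variable `W` with parameter `r > 0` and any
integer `k ≥ 1`, `E[W^k] ≤ (k / log(1 + k/r))^k`. -/
theorem poisson_moment_le_log_bound (r : ℝ) (hr : 0 < r) (k : ℕ) (hk : 1 ≤ k) :
    ∑' n : ℕ, ((n : ℝ) ^ k) * (r ^ n * Real.exp (-r) / (Nat.factorial n))
      ≤ ((k : ℝ) / Real.log (1 + (k : ℝ) / r)) ^ k := by
  have hk0 : (0 : ℝ) < k := by exact_mod_cast hk
  set t := Real.log (1 + (k : ℝ) / r) with ht_def
  have h1 : (1 : ℝ) < 1 + (k : ℝ) / r := by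
    have : 0 < (k : ℝ) / r := by positivity
    linarith
  have ht : 0 < t := Real.log_pos h1
  have het : Real.exp t = 1 + (k : ℝ) / r := Real.exp_log (by linarith)
  have hre : r * Real.exp t = r + k := by
    rw [het]; field_simp
  -- pointwise bound
  have key : ∀ n : ℕ, ((n : ℝ) ^ k) * (r ^ n * Real.exp (-r) / (Nat.factorial n))
      ≤ ((k : ℝ) / t) ^ k * Real.exp (-r - k) * ((r * Real.exp t) ^ n / (Nat.factorial n)) := by
    intro n
    have hn : (0 : ℝ) ≤ (n : ℝ) := n.cast_nonneg
    have hb : (n : ℝ) ^ k ≤ ((k : ℝ) / t) ^ k * Real.exp (- (k : ℝ)) * Real.exp (t * n) := by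
      have h2 := pow_le_exp_aux k hk (t * n) (by positivity)
      have h3 : (n : ℝ) ^ k = (t * n) ^ k / t ^ k := by
        rw [mul_pow]; field_simp
      rw [h3]
      rw [show ((k : ℝ) / t) ^ k * Real.exp (-(k : ℝ)) * Real.exp (t * ↑n)
          = (k : ℝ) ^ k * Real.exp (t * ↑n - (k : ℝ)) / t ^ k from by
        rw [div_pow, mul_assoc, ← Real.exp_add,
          show -(k : ℝ) + t * ↑n = t * ↑n - ↑k by ring]; ring]
      exact div_le_div_of_nonneg_right h2 (by positivity) |>.trans_eq rfl
    have hexp : Real.exp (t * n) = (Real.exp t) ^ n := by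
      rw [← Real.exp_nat_mul]; ring_nf
    have hfac : (0 : ℝ) < (Nat.factorial n : ℝ) := by positivity
    calc ((n : ℝ) ^ k) * (r ^ n * Real.exp (-r) / (Nat.factorial n))
        ≤ (((k : ℝ) / t) ^ k * Real.exp (- (k : ℝ)) * Real.exp (t * n)) *
            (r ^ n * Real.exp (-r) / (Nat.factorial n)) := by
          apply mul_le_mul_of_nonneg_right hb
          positivity
      _ = ((k : ℝ) / t) ^ k * Real.exp (-r - k) * ((r * Real.exp t) ^ n / (Nat.factorial n)) := by
          rw [hexp, mul_pow]
          rw [show Real.exp (-r - k) = Real.exp (-(k:ℝ)) * Real.exp (-r) by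
            rw [← Real.exp_add]; ring_nf]
          ring
  have hsum : Summable fun n : ℕ =>
      ((k : ℝ) / t) ^ k * Real.exp (-r - k) * ((r * Real.exp t) ^ n / (Nat.factorial n)) :=
    (Real.summable_pow_div_factorial (r * Real.exp t)).mul_left _
  have hle := Summable.tsum_le_tsum key
    (Summable.of_nonneg_of_le (fun n => by positivity) key hsum) hsum
  refine hle.trans_eq ?_
  rw [tsum_mul_left]
  have hexp_sum : ∑' n : ℕ, (r * Real.exp t) ^ n / (Nat.factorial n : ℝ)
      = Real.exp (r * Real.exp t) := by
    rw [Real.exp_eq_exp_ℝ, NormedSpace.exp_eq_tsum_div]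
  rw [hexp_sum, hre]
  rw [show -r - (k : ℝ) = -(r + k) by ring, mul_assoc, ← Real.exp_add,
    show -(r + (k:ℝ)) + (r + k) = 0 by ring, Real.exp_zero, mul_one]
end

section
/- For a Poisson random variable W with parameter λ > 0 and any integer k ≥ 1, E[W^k] ≤ λ^k exp(k^2/(2λ)). -/
open Finset Nat

/-- Stirling numbers of the second kind. -/
def St : ℕ → ℕ → ℕ
  | 0, 0 => 1
  | 0, _ + 1 => 0
  | _ + 1, 0 => 0
  | n + 1, j + 1 => (j + 1) * St n (j + 1) + St n j

lemma St_of_lt : ∀ k j, k < j → St k j = 0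
  | 0, _ + 1, _ => rfl
  | k + 1, j + 1, h => by
    rw [St, St_of_lt k (j + 1) (by omega), St_of_lt k j (by omega)]
    simp

lemma St_self : ∀ k, St k k = 1
  | 0 => rfl
  | k + 1 => by rw [St, St_self k, St_of_lt k (k + 1) (by omega)]; simp

/-- `x^n = Σ_j S(n,j) · (x)_j`. -/
lemma pow_eq_sum_St (n : ℕ) : ∀ k, n ^ k = ∑ j ∈ range (k + 1), St k j * n.descFactorial j
  | 0 => by simp [St]
  | k + 1 => by
    have key : ∀ j, n * n.descFactorial j = n.descFactorial (j + 1) + j * n.descFactorial j := by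
      intro j
      rcases lt_or_ge n j with h | h
      · rw [Nat.descFactorial_of_lt h, Nat.descFactorial_of_lt (by omega)]
        simp
      · rw [Nat.descFactorial_succ]
        nlinarith [Nat.sub_add_cancel h]
    have swap : ∑ j ∈ range (k + 1), j * St k j * n.descFactorial j
        = ∑ j ∈ range (k + 1), (j + 1) * St k (j + 1) * n.descFactorial (j + 1) := by
      rw [Finset.sum_range_succ' (fun j => j * St k j * n.descFactorial j),
        Finset.sum_range_succ (fun j => (j + 1) * St k (j + 1) * n.descFactorial (j + 1)),
        St_of_lt k (k + 1) (by omega)]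
      simp
    calc n ^ (k + 1) = n * ∑ j ∈ range (k + 1), St k j * n.descFactorial j := by
          rw [pow_succ, ← pow_eq_sum_St n k]; ring
      _ = ∑ j ∈ range (k + 1), (St k j * n.descFactorial (j + 1)
            + j * St k j * n.descFactorial j) := by
          rw [Finset.mul_sum]
          refine Finset.sum_congr rfl fun j _ => ?_
          rw [mul_left_comm, key j]; ring
      _ = ∑ j ∈ range (k + 2), St (k + 1) j * n.descFactorial j := by
          rw [Finset.sum_add_distrib, swap,
            Finset.sum_range_succ' (fun j => St (k + 1) j * n.descFactorial j)]
          have : ∀ j, St (k + 1) (j + 1) = (j + 1) * St k (j + 1) + St k j := fun j => rfl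
          simp only [this, St, Nat.mul_zero, Nat.zero_mul, Nat.add_zero,
            Nat.descFactorial_zero, Nat.mul_one, add_mul]
          rw [← Finset.sum_add_distrib, add_comm]
          exact Finset.sum_congr rfl fun j _ => by ring

/-- `(k+1)^(m+1) ≥ k^(m+1) + (m+1) k^m`. -/
lemma pow_succ_bound (k : ℕ) : ∀ m, k ^ (m + 1) + (m + 1) * k ^ m ≤ (k + 1) ^ (m + 1)
  | 0 => by simp
  | m + 1 => by
    have ih := pow_succ_bound k m
    calc k ^ (m + 2) + (m + 2) * k ^ (m + 1)
        ≤ (k ^ (m + 1) + (m + 1) * k ^ m) * (k + 1) := by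
          have he : (k ^ (m + 1) + (m + 1) * k ^ m) * (k + 1)
              = k ^ (m + 2) + (m + 2) * k ^ (m + 1) + (m + 1) * k ^ m := by ring
          rw [he]
          exact Nat.le_add_right _ _
      _ ≤ (k + 1) ^ (m + 1) * (k + 1) := Nat.mul_le_mul_right _ ih
      _ = (k + 1) ^ (m + 2) := by ring

/-- The key bound `2^(k-j) (k-j)! S(k,j) ≤ k^(2(k-j))`. -/
lemma St_bound : ∀ k j, j ≤ k → 2 ^ (k - j) * (k - j)! * St k j ≤ k ^ (2 * (k - j))
  | 0, 0, _ => by simp [St]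
  | k + 1, 0, _ => by simp [St]
  | k + 1, j + 1, h => by
    rcases Nat.eq_or_lt_of_le h with he | hlt
    · have hjk : j = k := by omega
      subst hjk
      simp [St_self]
    · have hjk : j + 1 ≤ k := by omega
      have ih1 := St_bound k (j + 1) hjk
      have ih2 := St_bound k j (by omega)
      rw [show k + 1 - (j + 1) = k - j from by omega, St]
      obtain ⟨i', hI⟩ : ∃ i', k - j = i' + 1 := ⟨k - j - 1, by omega⟩
      rw [show k - (j + 1) = i' from by omega] at ih1
      rw [hI] at ih2 ⊢
      have e1 : 2 ^ (i' + 1) * (i' + 1)! = 2 * (i' + 1) * (2 ^ i' * i' !) := by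
        rw [pow_succ, Nat.factorial_succ]; ring
      have b1 : 2 ^ (i' + 1) * (i' + 1)! * ((j + 1) * St k (j + 1))
          ≤ 2 * (i' + 1) * (j + 1) * k ^ (2 * i') := by
        rw [e1]
        calc 2 * (i' + 1) * (2 ^ i' * i' !) * ((j + 1) * St k (j + 1))
            = 2 * (i' + 1) * (j + 1) * (2 ^ i' * i' ! * St k (j + 1)) := by ring
          _ ≤ 2 * (i' + 1) * (j + 1) * k ^ (2 * i') :=
              Nat.mul_le_mul_left _ ih1
      have b2 : 2 * (i' + 1) * (j + 1) * k ^ (2 * i') ≤ 2 * (i' + 1) * k ^ (2 * i' + 1) := by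
        calc 2 * (i' + 1) * (j + 1) * k ^ (2 * i')
            ≤ 2 * (i' + 1) * (k * k ^ (2 * i')) := by
              rw [mul_assoc (2 * (i' + 1))]
              exact Nat.mul_le_mul_left _ (Nat.mul_le_mul_right _ hjk)
          _ = 2 * (i' + 1) * k ^ (2 * i' + 1) := by rw [pow_succ]; ring
      have b3 := pow_succ_bound k (2 * i' + 1)
      have hexp : 2 * i' + 1 + 1 = 2 * (i' + 1) := by ring
      rw [hexp] at b3
      calc 2 ^ (i' + 1) * (i' + 1)! * ((j + 1) * St k (j + 1) + St k j)
          = 2 ^ (i' + 1) * (i' + 1)! * ((j + 1) * St k (j + 1))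
            + 2 ^ (i' + 1) * (i' + 1)! * St k j := by ring
        _ ≤ 2 * (i' + 1) * k ^ (2 * i' + 1) + k ^ (2 * (i' + 1)) :=
            Nat.add_le_add (le_trans b1 b2) ih2
        _ = k ^ (2 * (i' + 1)) + (2 * i' + 1 + 1) * k ^ (2 * i' + 1) := by rw [hexp]; ring
        _ ≤ (k + 1) ^ (2 * (i' + 1)) := b3

lemma St_bound_real (k j : ℕ) (hj : j ≤ k) :
    (St k j : ℝ) ≤ ((k : ℝ) ^ 2 / 2) ^ (k - j) / (k - j)! := by
  have h := St_bound k j hj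
  have hcast : ((2 ^ (k - j) * (k - j)! * St k j : ℕ) : ℝ) ≤ ((k ^ (2 * (k - j)) : ℕ) : ℝ) :=
    Nat.cast_le.mpr h
  push_cast at hcast
  have h2 : (0 : ℝ) < 2 ^ (k - j) := by positivity
  have hf : (0 : ℝ) < (k - j)! := by positivity
  rw [pow_mul] at hcast
  rw [div_pow, div_div, le_div_iff₀ (by positivity)]
  calc (St k j : ℝ) * (2 ^ (k - j) * (k - j)!)
      = 2 ^ (k - j) * (k - j)! * (St k j : ℝ) := by ring
    _ ≤ ((k : ℝ) ^ 2) ^ (k - j) := hcast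

lemma exp_tsum (x : ℝ) : ∑' n : ℕ, x ^ n / n ! = Real.exp x := by
  rw [Real.exp_eq_exp_ℝ, NormedSpace.exp_eq_tsum_div]

noncomputable def pterm (r : ℝ) (j : ℕ) (n : ℕ) : ℝ :=
  (n.descFactorial j : ℝ) * (r ^ n * Real.exp (-r) / n !)

lemma pterm_shift (r : ℝ) (j n : ℕ) :
    pterm r j (n + j) = Real.exp (-r) * r ^ j * (r ^ n / n !) := by
  unfold pterm
  have h : (n ! : ℝ) * ((n + j).descFactorial j : ℝ) = ((n + j)! : ℝ) := by
    have := Nat.factorial_mul_descFactorial (Nat.le_add_left j n)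
    rw [Nat.add_sub_cancel] at this
    exact_mod_cast this
  have hn : ((n + j)! : ℝ) ≠ 0 := by positivity
  have hn' : (n ! : ℝ) ≠ 0 := by positivity
  have key : ((n + j).descFactorial j : ℝ) = ((n + j)! : ℝ) / (n ! : ℝ) := by
    rw [eq_div_iff hn', mul_comm]
    exact h
  rw [key, pow_add]
  field_simp

lemma summable_pterm (r : ℝ) (j : ℕ) : Summable (pterm r j) := by
  rw [← summable_nat_add_iff j]
  have : (fun n => pterm r j (n + j))
      = fun n => Real.exp (-r) * r ^ j * (r ^ n / n !) := funext (pterm_shift r j)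
  rw [this]
  exact (Real.summable_pow_div_factorial r).mul_left _

lemma tsum_pterm (r : ℝ) (j : ℕ) : ∑' n, pterm r j n = r ^ j := by
  rw [← Summable.sum_add_tsum_nat_add j (summable_pterm r j)]
  have h1 : ∑ n ∈ range j, pterm r j n = 0 := by
    refine Finset.sum_eq_zero fun n hn => ?_
    unfold pterm
    rw [Nat.descFactorial_of_lt (Finset.mem_range.mp hn)]
    simp
  have h2 : ∑' n : ℕ, pterm r j (n + j) = Real.exp (-r) * r ^ j * Real.exp r := by
    rw [tsum_congr (pterm_shift r j), tsum_mul_left, exp_tsum]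
  rw [h1, h2, zero_add, mul_right_comm, ← Real.exp_add]
  simp

/-- For a Poisson random variable `W` with parameter `r > 0` and any integer `k ≥ 1`,
`E[W^k] ≤ r^k exp(k^2/(2r))`. -/
theorem poisson_moment_le_exp_bound (r : ℝ) (hr : 0 < r) (k : ℕ) (hk : 1 ≤ k) :
    ∑' n : ℕ, ((n : ℝ) ^ k) * (r ^ n * Real.exp (-r) / (Nat.factorial n))
      ≤ r ^ k * Real.exp ((k : ℝ) ^ 2 / (2 * r)) := by
  have expand : ∀ n : ℕ, ((n : ℝ) ^ k) * (r ^ n * Real.exp (-r) / (Nat.factorial n))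
      = ∑ j ∈ range (k + 1), (St k j : ℝ) * pterm r j n := by
    intro n
    have h := pow_eq_sum_St n k
    have hc : ((n : ℝ) ^ k) = ∑ j ∈ range (k + 1), (St k j : ℝ) * (n.descFactorial j : ℝ) := by
      rw [← Nat.cast_pow, h]
      push_cast
      rfl
    rw [hc, Finset.sum_mul]
    exact Finset.sum_congr rfl fun j _ => by unfold pterm; ring
  rw [tsum_congr expand, Summable.tsum_finsetSum (fun j _ => (summable_pterm r j).mul_left _)]
  have step1 : ∑ j ∈ range (k + 1), ∑' n, (St k j : ℝ) * pterm r j n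
      = ∑ j ∈ range (k + 1), (St k j : ℝ) * r ^ j := by
    refine Finset.sum_congr rfl fun j _ => ?_
    rw [tsum_mul_left, tsum_pterm]
  rw [step1]
  have step2 : ∑ j ∈ range (k + 1), (St k j : ℝ) * r ^ j
      ≤ ∑ j ∈ range (k + 1), ((k : ℝ) ^ 2 / 2) ^ (k - j) / (k - j)! * r ^ j := by
    refine Finset.sum_le_sum fun j hj => ?_
    have hjk : j ≤ k := Nat.lt_succ_iff.mp (Finset.mem_range.mp hj)
    exact mul_le_mul_of_nonneg_right (St_bound_real k j hjk) (by positivity)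
  refine le_trans step2 ?_
  have reflect : ∑ j ∈ range (k + 1), ((k : ℝ) ^ 2 / 2) ^ (k - j) / (k - j)! * r ^ j
      = ∑ i ∈ range (k + 1), ((k : ℝ) ^ 2 / 2) ^ i / i ! * r ^ (k - i) := by
    rw [← Finset.sum_range_reflect (fun i => ((k : ℝ) ^ 2 / 2) ^ i / i ! * r ^ (k - i)) (k + 1)]
    refine Finset.sum_congr rfl fun j hj => ?_
    have hjk : j ≤ k := Nat.lt_succ_iff.mp (Finset.mem_range.mp hj)
    have e1 : k + 1 - 1 - j = k - j := by omega
    have e2 : k - (k - j) = j := by omega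
    rw [e1, e2]
  rw [reflect]
  have term_eq : ∀ i ∈ range (k + 1), ((k : ℝ) ^ 2 / 2) ^ i / i ! * r ^ (k - i)
      = r ^ k * (((k : ℝ) ^ 2 / (2 * r)) ^ i / i !) := by
    intro i hi
    have hik : i ≤ k := Nat.lt_succ_iff.mp (Finset.mem_range.mp hi)
    have hrk : r ^ (k - i) = r ^ k / r ^ i := by
      rw [eq_div_iff (by positivity), ← pow_add]
      congr 1
      omega
    rw [hrk]
    have h1 : ((k : ℝ) ^ 2 / (2 * r)) ^ i = ((k : ℝ) ^ 2 / 2) ^ i / r ^ i := by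
      rw [div_pow, div_pow, mul_pow, div_div]
    rw [h1]
    field_simp
  rw [Finset.sum_congr rfl term_eq, ← Finset.mul_sum]
  have hx : (0 : ℝ) ≤ (k : ℝ) ^ 2 / (2 * r) := by positivity
  exact mul_le_mul_of_nonneg_left (Real.sum_le_exp_of_nonneg hx (k + 1)) (by positivity)
end

section
/- Let W be a Poisson random variable with parameter λ > 0 and p ≥ 1 an integer. Then E[(1+W)^p] ≤ (1 + p/log(1 + 1/λ))^p ≤ (2 max{1, 1/log(1+1/λ)})^p · p^p. -/
lemma real_exp_tsum (x : ℝ) : Real.exp x = ∑' n : ℕ, x ^ n / n.factorial := by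
  rw [Real.exp_eq_exp_ℝ, NormedSpace.exp_eq_tsum_div]

lemma poisson_pointwise (j : ℕ) (t : ℝ) (ht : 0 < t) (n : ℕ) :
    (n : ℝ) ^ j ≤ ((j : ℝ) / t) ^ j * Real.exp (t * n - j) := by
  rcases Nat.eq_zero_or_pos j with hj | hj
  · subst hj
    simp only [pow_zero, Nat.cast_zero, sub_zero, div_zero, one_mul]
    rw [show (1:ℝ) = Real.exp 0 by simp]
    exact Real.exp_le_exp.2 (by positivity)
  · have hj0 : (0:ℝ) < (j : ℝ) := by exact_mod_cast hj
    have key : (n : ℝ) ^ j = ((j : ℝ) / t) ^ j * (t * n / j) ^ j := by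
      rw [← mul_pow]
      congr 1
      field_simp
    rw [key]
    have h1 : (t * n / j : ℝ) ≤ Real.exp (t * n / j - 1) := by
      have := Real.add_one_le_exp (t * n / j - 1)
      linarith
    have h2 : (t * n / j : ℝ) ^ j ≤ Real.exp (t * n / j - 1) ^ j :=
      pow_le_pow_left₀ (by positivity) h1 j
    have h3 : Real.exp (t * n / j - 1) ^ j = Real.exp (t * n - j) := by
      rw [← Real.exp_nat_mul]
      congr 1
      field_simp
    rw [h3] at h2
    exact mul_le_mul_of_nonneg_left h2 (by positivity)

lemma poisson_term_eq (r t : ℝ) (j n : ℕ) :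
    Real.exp (t * n - j) * (r ^ n * Real.exp (-r) / n.factorial)
      = (Real.exp (-(j:ℝ)) * Real.exp (-r)) * ((r * Real.exp t) ^ n / n.factorial) := by
  have e1 : Real.exp (t * n - (j:ℝ)) = Real.exp t ^ n * Real.exp (-(j:ℝ)) := by
    rw [← Real.exp_nat_mul, ← Real.exp_add]
    congr 1
    ring
  rw [e1, mul_pow]
  ring

lemma poisson_summable (r : ℝ) (hr : 0 < r) (j : ℕ) :
    Summable (fun n : ℕ => (n : ℝ) ^ j * (r ^ n * Real.exp (-r) / n.factorial)) := by
  apply Summable.of_nonneg_of_le (fun n => by positivity)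
    (f := fun n : ℕ => ((j:ℝ) / 1) ^ j * ((Real.exp (-(j:ℝ)) * Real.exp (-r)) *
      ((r * Real.exp 1) ^ n / n.factorial)))
  · intro n
    calc (n : ℝ) ^ j * (r ^ n * Real.exp (-r) / n.factorial)
        ≤ (((j:ℝ) / 1) ^ j * Real.exp (1 * n - j)) * (r ^ n * Real.exp (-r) / n.factorial) :=
          mul_le_mul_of_nonneg_right (poisson_pointwise j 1 one_pos n) (by positivity)
      _ = ((j:ℝ) / 1) ^ j * (Real.exp (1 * n - j) * (r ^ n * Real.exp (-r) / n.factorial)) := by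
          ring
      _ = _ := by rw [poisson_term_eq r 1 j n]
  · exact (((Real.summable_pow_div_factorial (r * Real.exp 1)).mul_left _).mul_left _)

lemma poisson_pmf_tsum (r : ℝ) :
    ∑' n : ℕ, r ^ n * Real.exp (-r) / n.factorial = 1 := by
  have : ∀ n : ℕ, r ^ n * Real.exp (-r) / n.factorial
      = Real.exp (-r) * (r ^ n / n.factorial) := fun n => by ring
  simp_rw [this]
  rw [tsum_mul_left, ← real_exp_tsum, ← Real.exp_add]
  simp

lemma poisson_moment (r : ℝ) (hr : 0 < r) (j : ℕ) (hj : 1 ≤ j) :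
    ∑' n : ℕ, (n : ℝ) ^ j * (r ^ n * Real.exp (-r) / n.factorial)
      ≤ ((j : ℝ) / Real.log (1 + j / r)) ^ j := by
  set t := Real.log (1 + (j:ℝ) / r) with hts
  have hjr : (0:ℝ) < (j:ℝ) / r := by positivity
  have ht : 0 < t := Real.log_pos (by linarith)
  have het : Real.exp t = 1 + (j:ℝ) / r := Real.exp_log (by linarith)
  have hsum2 : Summable (fun n : ℕ => ((j:ℝ) / t) ^ j * (Real.exp (t * n - j) *
      (r ^ n * Real.exp (-r) / n.factorial))) := by
    simp_rw [poisson_term_eq r t j]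
    exact ((Real.summable_pow_div_factorial (r * Real.exp t)).mul_left _).mul_left _
  calc ∑' n : ℕ, (n : ℝ) ^ j * (r ^ n * Real.exp (-r) / n.factorial)
      ≤ ∑' n : ℕ, ((j:ℝ) / t) ^ j * (Real.exp (t * n - j) *
          (r ^ n * Real.exp (-r) / n.factorial)) := by
        apply Summable.tsum_le_tsum _ (poisson_summable r hr j) hsum2
        intro n
        calc (n : ℝ) ^ j * (r ^ n * Real.exp (-r) / n.factorial)
            ≤ (((j:ℝ) / t) ^ j * Real.exp (t * n - j)) *
                (r ^ n * Real.exp (-r) / n.factorial) :=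
              mul_le_mul_of_nonneg_right (poisson_pointwise j t ht n) (by positivity)
          _ = _ := by ring
    _ = ((j:ℝ) / t) ^ j * ((Real.exp (-(j:ℝ)) * Real.exp (-r)) * Real.exp (r * Real.exp t)) := by
        simp_rw [poisson_term_eq r t j]
        rw [tsum_mul_left, tsum_mul_left, ← real_exp_tsum]
    _ = ((j:ℝ) / t) ^ j := by
        have : r * Real.exp t = r + j := by
          rw [het]; field_simp
        rw [this, ← Real.exp_add, ← Real.exp_add,
          show -(j:ℝ) + -r + (r + j) = 0 by ring, Real.exp_zero, mul_one]

/-- Let `W` be Poisson with parameter `r > 0` and `p ≥ 1` an integer.  Then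
`E[(1+W)^p] ≤ (1 + p/log(1 + 1/r))^p ≤ (2 max{1, 1/log(1+1/r)})^p · p^p`. -/
theorem poisson_one_add_moment_bound (r : ℝ) (hr : 0 < r) (p : ℕ) (hp : 1 ≤ p) :
    (∑' n : ℕ, ((1 + (n : ℝ)) ^ p) * (r ^ n * Real.exp (-r) / (Nat.factorial n))
      ≤ (1 + (p : ℝ) / Real.log (1 + 1 / r)) ^ p) ∧
    ((1 + (p : ℝ) / Real.log (1 + 1 / r)) ^ p
      ≤ (2 * max 1 (1 / Real.log (1 + 1 / r))) ^ p * (p : ℝ) ^ p) := by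
  set L := Real.log (1 + 1 / r) with hLs
  have hr1 : (0:ℝ) < 1 / r := by positivity
  have hL : 0 < L := Real.log_pos (by linarith)
  constructor
  · -- first inequality
    have hexpand : ∀ n : ℕ, ((1 + (n : ℝ)) ^ p) * (r ^ n * Real.exp (-r) / n.factorial)
        = ∑ j ∈ Finset.range (p + 1),
            (p.choose j : ℝ) * ((n : ℝ) ^ j * (r ^ n * Real.exp (-r) / n.factorial)) := by
      intro n
      have h1 : (1 + (n : ℝ)) ^ p = ∑ j ∈ Finset.range (p + 1),
          (n : ℝ) ^ j * 1 ^ (p - j) * (p.choose j : ℝ) := by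
        rw [add_comm]; exact add_pow (n : ℝ) 1 p
      rw [h1, Finset.sum_mul]
      exact Finset.sum_congr rfl fun j _ => by ring
    have hsumj : ∀ j ∈ Finset.range (p + 1), Summable (fun n : ℕ =>
        (p.choose j : ℝ) * ((n : ℝ) ^ j * (r ^ n * Real.exp (-r) / n.factorial))) :=
      fun j _ => (poisson_summable r hr j).mul_left _
    calc ∑' n : ℕ, ((1 + (n : ℝ)) ^ p) * (r ^ n * Real.exp (-r) / n.factorial)
        = ∑ j ∈ Finset.range (p + 1),
            ∑' n : ℕ, (p.choose j : ℝ) * ((n : ℝ) ^ j * (r ^ n * Real.exp (-r) / n.factorial)) := by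
          simp_rw [hexpand]
          exact Summable.tsum_finsetSum hsumj
      _ ≤ ∑ j ∈ Finset.range (p + 1), (p.choose j : ℝ) * ((p : ℝ) / L) ^ j := by
          apply Finset.sum_le_sum
          intro j hj
          rw [tsum_mul_left]
          apply mul_le_mul_of_nonneg_left _ (by positivity)
          rcases Nat.eq_zero_or_pos j with h0 | h1
          · subst h0
            simp only [pow_zero, one_mul]
            rw [poisson_pmf_tsum r]
          · have hjp : j ≤ p := Nat.lt_succ_iff.mp (Finset.mem_range.mp hj)
            have htj : L ≤ Real.log (1 + (j:ℝ) / r) := by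
              apply Real.log_le_log (by linarith)
              have : (1:ℝ) ≤ (j:ℝ) := by exact_mod_cast h1
              have h2 : (1:ℝ) / r ≤ (j:ℝ) / r := by gcongr
              linarith
            have htj0 : 0 < Real.log (1 + (j:ℝ) / r) := lt_of_lt_of_le hL htj
            calc ∑' n : ℕ, (n : ℝ) ^ j * (r ^ n * Real.exp (-r) / n.factorial)
                ≤ ((j : ℝ) / Real.log (1 + (j:ℝ) / r)) ^ j := poisson_moment r hr j h1
              _ ≤ ((p : ℝ) / L) ^ j := by
                  apply pow_le_pow_left₀ (by positivity)
                  apply div_le_div₀ (by positivity) (by exact_mod_cast hjp) hL htj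
      _ = (1 + (p : ℝ) / L) ^ p := by
          rw [add_comm (1:ℝ), add_pow]
          exact Finset.sum_congr rfl fun j _ => by ring
  · -- second inequality
    set c := max (1:ℝ) (1 / L) with hcs
    have hc1 : (1:ℝ) ≤ c := le_max_left _ _
    have hc2 : 1 / L ≤ c := le_max_right _ _
    have hp' : (1:ℝ) ≤ (p:ℝ) := by exact_mod_cast hp
    have hbase : 1 + (p : ℝ) / L ≤ (2 * c) * p := by
      have h1 : (p:ℝ) / L = p * (1 / L) := by ring
      nlinarith
    calc (1 + (p : ℝ) / L) ^ p ≤ ((2 * c) * p) ^ p := by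
          apply pow_le_pow_left₀ (by positivity) hbase
      _ = (2 * c) ^ p * (p : ℝ) ^ p := mul_pow _ _ _
end
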